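/- arXiv:2211.07801 — 2 statements merged into one kernel-verified Lean document; each statement's English description precedes it below -/
import Mathlib

section
/- Suppose θ_{t,s} = θ¹_t · θ²_s for continuous strictly positive functions θ¹,θ²:[0,T]→(0,∞). Then the map C↦Y^C is injective: if two consumption plans C and C' satisfy Y^C_t = Y^{C'}_t for all t∈[0,T], then C_t = C'_t for all t∈[0,T]. -/
/-!
Under a product kernel, `Y^C_t = η_t + θ¹_t ∫_{[0,t]} θ² dC`, so equal satisfaction levels and
`θ¹ > 0` give equal distribution functions `t ↦ ∫_{[0,t]} θ² dC` of the weighted measures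
`θ² dC` and `θ² dC'` on `[0,T]`; hence these finite measures coincide, and dividing out the
positive density `θ²` gives `dC = dC'`.
-/

open MeasureTheory Set Filter

noncomputable section

/-- A consumption plan on `[0,T]`, identified with the finite measure `dC` it induces on
`[0,T]` (including a possible point mass at `0`, corresponding to `C_{0-} = 0`).
The cumulative consumption function is `t ↦ (μ (Icc 0 t)).toReal`, which is automatically
nonnegative, nondecreasing and right-continuous. -/
structure ConsumptionPlan (T : ℝ) where
  μ : Measure ℝ
  fin : IsFiniteMeasure μ
  supp : μ (Set.Icc 0 T)ᶜ = 0

/-- The cumulative consumption `C_t`. -/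
def ConsumptionPlan.val {T : ℝ} (C : ConsumptionPlan T) (t : ℝ) : ℝ :=
  (C.μ (Set.Icc 0 t)).toReal

/-- The level of satisfaction `Y^C_t = η_t + ∫_0^t θ(t,s) dC_s` (integral over `[0,t]`). -/
def satisfaction (η : ℝ → ℝ) (θ : ℝ → ℝ → ℝ) {T : ℝ} (C : ConsumptionPlan T) (t : ℝ) : ℝ :=
  η t + ∫ s in Set.Icc 0 t, θ t s ∂C.μ

/-- `U` is a (continuous) recursive utility for satisfaction level `Y`:
`U_t = ∫_t^T f(s, Y_s, U_s) ds` on `[0,T]`. -/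
def IsRecursiveUtility (T : ℝ) (f : ℝ → ℝ → ℝ → ℝ) (Y U : ℝ → ℝ) : Prop :=
  ContinuousOn U (Set.Icc 0 T) ∧ ∀ t ∈ Set.Icc 0 T, U t = ∫ s in t..T, f s (Y s) (U s)

/-- Assumption A1 on the intertemporal aggregator `f`. -/
structure AssumptionA1 (T : ℝ) (f : ℝ → ℝ → ℝ → ℝ) : Prop where
  strictConcave : ∀ s ∈ Set.Icc 0 T,
    StrictConcaveOn ℝ (Set.Ici 0 ×ˢ (Set.univ : Set ℝ)) (fun p : ℝ × ℝ => f s p.1 p.2)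
  contDiff : ∀ s ∈ Set.Icc 0 T,
    ContDiffOn ℝ 1 (fun p : ℝ × ℝ => f s p.1 p.2) (Set.Ici 0 ×ˢ (Set.univ : Set ℝ))
  strictMono : ∀ s ∈ Set.Icc 0 T, ∀ u : ℝ, StrictMonoOn (fun y => f s y u) (Set.Ici 0)
  lipschitz : ∃ K > 0, ∀ s ∈ Set.Icc 0 T, ∀ y ∈ Set.Ici (0 : ℝ), ∀ u u' : ℝ,
    |f s y u - f s y u'| ≤ K * |u - u'|
  growth : ∃ α ∈ Set.Ioo (0 : ℝ) 1, ∃ K > 0, ∀ s ∈ Set.Icc 0 T, ∀ y ∈ Set.Ici (0 : ℝ),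
    |f s y 0| ≤ K * (1 + |y| ^ α)

theorem MeasureTheory.Measure.ext_of_Icc_of_compl_Icc_eq_zero {μ ν : Measure ℝ}
    [IsFiniteMeasure μ] {a b : ℝ} (hμ : μ (Icc a b)ᶜ = 0) (hν : ν (Icc a b)ᶜ = 0)
    (h : ∀ t ∈ Icc a b, μ (Icc a t) = ν (Icc a t)) : μ = ν := by
  have hIic : ∀ {ρ : Measure ℝ}, ρ (Icc a b)ᶜ = 0 → ∀ x, ρ (Iic x) = ρ (Icc a (min x b)) := by
    intro ρ hρ x
    rw [← measure_inter_conull hρ]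
    congr 1
    ext y
    simp only [mem_inter_iff, mem_Iic, mem_Icc, le_min_iff]
    tauto
  refine ext_of_Iic μ ν fun x => ?_
  rw [hIic hμ, hIic hν]
  by_cases hx : a ≤ min x b
  · exact h _ ⟨hx, min_le_right x b⟩
  · simp [Icc_eq_empty hx]

theorem MeasureTheory.Measure.eq_of_withDensity_ofReal_eq {α : Type*} [MeasurableSpace α]
    {μ ν : Measure α} {f : α → ℝ} (hfμ : AEMeasurable f μ) (hfν : AEMeasurable f ν)
    (hμ : ∀ᵐ x ∂μ, 0 < f x) (hν : ∀ᵐ x ∂ν, 0 < f x)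
    (h : μ.withDensity (fun x => ENNReal.ofReal (f x)) =
      ν.withDensity (fun x => ENNReal.ofReal (f x))) : μ = ν := by
  have hinv : ∀ {ρ : Measure α}, AEMeasurable f ρ → (∀ᵐ x ∂ρ, 0 < f x) →
      (ρ.withDensity (fun x => ENNReal.ofReal (f x))).withDensity
        (fun x => (ENNReal.ofReal (f x))⁻¹) = ρ := fun hf hpos =>
    withDensity_inv_same₀ hf.ennreal_ofReal (hpos.mono fun _ hx => (ENNReal.ofReal_pos.2 hx).ne')
      (ae_of_all _ fun _ => ENNReal.ofReal_ne_top)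
  rw [← hinv hfμ hμ, ← hinv hfν hν, h]

theorem MeasureTheory.setIntegral_eq_toReal_withDensity_ofReal {α : Type*} [MeasurableSpace α]
    {μ : Measure α} {f : α → ℝ} (hf : Integrable f μ) (hf0 : 0 ≤ᵐ[μ] f) {s : Set α}
    (hs : MeasurableSet s) :
    ∫ x in s, f x ∂μ = (μ.withDensity (fun x => ENNReal.ofReal (f x)) s).toReal := by
  rw [withDensity_apply _ hs, ← ofReal_integral_eq_lintegral_ofReal hf.restrict
    (ae_restrict_of_ae hf0), ENNReal.toReal_ofReal (integral_nonneg_of_ae (ae_restrict_of_ae hf0))]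

namespace ConsumptionPlan

variable {T : ℝ}

instance (C : ConsumptionPlan T) : IsFiniteMeasure C.μ := C.fin

theorem ae_mem_Icc (C : ConsumptionPlan T) : ∀ᵐ s ∂C.μ, s ∈ Icc 0 T :=
  mem_ae_iff.2 C.supp

theorem integrable_of_continuousOn (C : ConsumptionPlan T) {f : ℝ → ℝ}
    (hf : ContinuousOn f (Icc 0 T)) : Integrable f C.μ := by
  rw [← Measure.restrict_eq_self_of_ae_mem C.ae_mem_Icc]
  exact hf.integrableOn_Icc

theorem eq_of_forall_setIntegral_Icc_eq {C C' : ConsumptionPlan T} {f : ℝ → ℝ}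
    (hf : ContinuousOn f (Icc 0 T)) (hfpos : ∀ s ∈ Icc 0 T, 0 < f s)
    (h : ∀ t ∈ Icc 0 T, ∫ s in Icc 0 t, f s ∂C.μ = ∫ s in Icc 0 t, f s ∂C'.μ) :
    C.μ = C'.μ := by
  have hint (D : ConsumptionPlan T) : Integrable f D.μ := D.integrable_of_continuousOn hf
  have hpos (D : ConsumptionPlan T) : ∀ᵐ s ∂D.μ, 0 < f s := D.ae_mem_Icc.mono hfpos
  suffices hw : C.μ.withDensity (fun s => ENNReal.ofReal (f s)) =
      C'.μ.withDensity (fun s => ENNReal.ofReal (f s)) from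
    Measure.eq_of_withDensity_ofReal_eq (hint C).aemeasurable (hint C').aemeasurable
      (hpos C) (hpos C') hw
  have := isFiniteMeasure_withDensity_ofReal (hint C).hasFiniteIntegral
  have := isFiniteMeasure_withDensity_ofReal (hint C').hasFiniteIntegral
  refine Measure.ext_of_Icc_of_compl_Icc_eq_zero (withDensity_absolutelyContinuous _ _ C.supp)
    (withDensity_absolutelyContinuous _ _ C'.supp) fun t ht => ?_
  rw [← ENNReal.toReal_eq_toReal_iff' (measure_ne_top _ _) (measure_ne_top _ _),
    ← setIntegral_eq_toReal_withDensity_ofReal (hint C) ((hpos C).mono fun _ => le_of_lt)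
      measurableSet_Icc,
    ← setIntegral_eq_toReal_withDensity_ofReal (hint C') ((hpos C').mono fun _ => le_of_lt)
      measurableSet_Icc]
  exact h t ht

end ConsumptionPlan

theorem satisfaction_of_product_kernel {T : ℝ} {η : ℝ → ℝ} {θ : ℝ → ℝ → ℝ} {θ1 θ2 : ℝ → ℝ}
    (hprod : ∀ t ∈ Icc 0 T, ∀ s ∈ Icc 0 T, θ t s = θ1 t * θ2 s) (C : ConsumptionPlan T)
    {t : ℝ} (ht : t ∈ Icc 0 T) :
    satisfaction η θ C t = η t + θ1 t * ∫ s in Icc 0 t, θ2 s ∂C.μ := by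
  rw [satisfaction, ← integral_const_mul]
  congr 1
  refine setIntegral_congr_ae measurableSet_Icc ?_
  filter_upwards [C.ae_mem_Icc] with s hs _
  exact hprod t ht s hs

theorem satisfaction_injective_of_product_kernel_general
    (T : ℝ)
    (η : ℝ → ℝ) (θ : ℝ → ℝ → ℝ) (θ1 θ2 : ℝ → ℝ)
    (hθ1pos : ∀ t ∈ Set.Icc 0 T, 0 < θ1 t)
    (hθ2 : ContinuousOn θ2 (Set.Icc 0 T)) (hθ2pos : ∀ t ∈ Set.Icc 0 T, 0 < θ2 t)
    (hprod : ∀ t ∈ Set.Icc 0 T, ∀ s ∈ Set.Icc 0 T, θ t s = θ1 t * θ2 s)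
    (C C' : ConsumptionPlan T)
    (hY : ∀ t ∈ Set.Icc 0 T, satisfaction η θ C t = satisfaction η θ C' t) :
    ∀ t ∈ Set.Icc 0 T, C.val t = C'.val t := by
  have hμ : C.μ = C'.μ := by
    refine ConsumptionPlan.eq_of_forall_setIntegral_Icc_eq hθ2 hθ2pos fun t ht => ?_
    have hYt := hY t ht
    rw [satisfaction_of_product_kernel hprod C ht, satisfaction_of_product_kernel hprod C' ht]
      at hYt
    exact mul_left_cancel₀ (hθ1pos t ht).ne' (add_left_cancel hYt)
  intro t _
  simp only [ConsumptionPlan.val, hμ]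

/-- If `θ(t,s) = θ¹(t)·θ²(s)` for continuous strictly positive functions
`θ¹, θ² : [0,T] → (0,∞)`, then `C ↦ Y^C` is injective: if `Y^C_t = Y^{C'}_t` for all
`t ∈ [0,T]`, then `C_t = C'_t` for all `t ∈ [0,T]`. -/
theorem satisfaction_injective_of_product_kernel
    (T : ℝ) (hT : 0 < T)
    (η : ℝ → ℝ) (θ : ℝ → ℝ → ℝ) (θ1 θ2 : ℝ → ℝ)
    (hη : ContinuousOn η (Set.Icc 0 T)) (hηnn : ∀ t ∈ Set.Icc 0 T, 0 ≤ η t)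
    (hθ1 : ContinuousOn θ1 (Set.Icc 0 T)) (hθ1pos : ∀ t ∈ Set.Icc 0 T, 0 < θ1 t)
    (hθ2 : ContinuousOn θ2 (Set.Icc 0 T)) (hθ2pos : ∀ t ∈ Set.Icc 0 T, 0 < θ2 t)
    (hprod : ∀ t ∈ Set.Icc 0 T, ∀ s ∈ Set.Icc 0 T, θ t s = θ1 t * θ2 s)
    (C C' : ConsumptionPlan T)
    (hY : ∀ t ∈ Set.Icc 0 T, satisfaction η θ C t = satisfaction η θ C' t) :
    ∀ t ∈ Set.Icc 0 T, C.val t = C'.val t :=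
  satisfaction_injective_of_product_kernel_general T η θ θ1 θ2 hθ1pos hθ2 hθ2pos hprod C C' hY
end
end

section
/- Let T>0, K>0, and let g,h:[0,T]→ℝ be integrable functions with δ_t := ∫_t^T (g_s + h_s) ds for t∈[0,T]. If (i) h_s ≥ −K|δ_s| for all s∈[0,T], and (ii) g_s ≥ 0 for all s∈[0,T] and g_s > 0 for all s in some nonempty open interval (t₀,t₁) ⊂ [0,T], then δ_0 > 0. -/
/-!
Since `g ≥ 0` and `h ≥ -K|δ|`, we have `δ τ ≤ δ t + K ∫ₜ^τ |δ|` for `t ≤ τ`, an integral form of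
the differential inequality `δ' ≤ K |δ|`. Grönwall's lemma, run backwards from `δ T = 0` on a
maximal interval where `δ < 0`, shows that `δ` never becomes negative; run forwards from `0`, it
shows that `δ 0 = 0` would force `δ ≡ 0` on `[0, T]`. But then `h ≥ 0` there, so
`δ t₀ - δ t₁ = ∫_{t₀}^{t₁} (g + h) > 0`.
-/

open MeasureTheory Set Filter
open scoped Nat Topology

theorem integral_sub_pow_div_factorial (n : ℕ) (t b : ℝ) :
    ∫ s in t..b, (b - s) ^ n / n ! = (b - t) ^ (n + 1) / (n + 1)! := by
  rw [intervalIntegral.integral_div, intervalIntegral.integral_comp_sub_left (fun x => x ^ n),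
    sub_self, integral_pow, Nat.factorial_succ]
  push_cast
  field_simp
  ring

theorem nonpos_of_le_mul_integral_right {K a b : ℝ} (hK : 0 ≤ K) {f : ℝ → ℝ}
    (hf : ContinuousOn f (Icc a b)) (hle : ∀ t ∈ Icc a b, f t ≤ K * ∫ s in t..b, f s) :
    ∀ t ∈ Icc a b, f t ≤ 0 := by
  obtain ⟨C, hC⟩ := isCompact_Icc.exists_bound_of_continuousOn hf
  have iterate : ∀ n : ℕ, ∀ t ∈ Icc a b, f t ≤ C * K ^ n * ((b - t) ^ n / n !) := by
    intro n
    induction n with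
    | zero => exact fun t ht => by simpa using (le_abs_self _).trans (hC t ht)
    | succ n ih =>
      intro t ht
      have hsub : Icc t b ⊆ Icc a b := Icc_subset_Icc_left ht.1
      calc f t ≤ K * ∫ s in t..b, f s := hle t ht
        _ ≤ K * ∫ s in t..b, C * K ^ n * ((b - s) ^ n / n !) := by
          gcongr
          refine intervalIntegral.integral_mono_on ht.2
            ((hf.mono hsub).intervalIntegrable_of_Icc ht.2)
            ((by fun_prop : Continuous _).intervalIntegrable _ _) fun s hs => ?_
          exact ih s (hsub hs)
        _ = C * K ^ (n + 1) * ((b - t) ^ (n + 1) / (n + 1)!) := by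
          rw [intervalIntegral.integral_const_mul, integral_sub_pow_div_factorial]
          ring
  intro t ht
  have hlim : Tendsto (fun n : ℕ => C * K ^ n * ((b - t) ^ n / n !)) atTop (𝓝 0) := by
    simpa [mul_pow, mul_assoc, mul_div_assoc] using
      (FloorSemiring.tendsto_pow_div_factorial_atTop (K * (b - t))).const_mul C
  exact ge_of_tendsto' hlim fun n => iterate n t ht

theorem nonpos_of_le_mul_integral_left {K a b : ℝ} (hK : 0 ≤ K) {f : ℝ → ℝ}
    (hf : ContinuousOn f (Icc a b)) (hle : ∀ t ∈ Icc a b, f t ≤ K * ∫ s in a..t, f s) :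
    ∀ t ∈ Icc a b, f t ≤ 0 := by
  have hneg : MapsTo (fun s : ℝ => -s) (Icc (-b) (-a)) (Icc a b) :=
    fun s hs => ⟨le_neg.mp hs.2, neg_le.mp hs.1⟩
  have hrefl := nonpos_of_le_mul_integral_right hK (hf.comp continuousOn_neg hneg) fun t ht => by
    simpa [intervalIntegral.integral_comp_neg] using hle (-t) (hneg ht)
  intro t ht
  simpa using hrefl (-t) ⟨neg_le_neg ht.2, neg_le_neg ht.1⟩

section IntegralInequality

variable {K a b : ℝ} {F : ℝ → ℝ}

theorem nonneg_of_le_add_mul_integral_abs (hK : 0 ≤ K) (hF : ContinuousOn F (Icc a b))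
    (hb : 0 ≤ F b) (hle : ∀ t ∈ Icc a b, ∀ τ ∈ Icc t b, F τ ≤ F t + K * ∫ s in t..τ, |F s|) :
    ∀ t ∈ Icc a b, 0 ≤ F t := by
  by_contra! ⟨t, ht, hFt⟩
  set S := Icc t b ∩ F ⁻¹' Ici 0
  have hS : IsClosed S :=
    (hF.mono (Icc_subset_Icc_left ht.1)).preimage_isClosed_of_isClosed isClosed_Icc isClosed_Ici
  have hSbdd : BddBelow S := ⟨t, fun u hu => hu.1.1⟩
  have hτ : sInf S ∈ S := hS.csInf_mem ⟨b, ⟨ht.2, le_rfl⟩, hb⟩ hSbdd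
  set τ := sInf S
  have hneg : ∀ s ∈ Ico t τ, F s < 0 := fun s hs => not_le.mp fun h =>
    hs.2.not_ge (csInf_le hSbdd ⟨⟨hs.1, hs.2.le.trans hτ.1.2⟩, h⟩)
  have hsub : Icc t τ ⊆ Icc a b := Icc_subset_Icc ht.1 hτ.1.2
  suffices ∀ s ∈ Icc t τ, -F s ≤ K * ∫ u in s..τ, -F u from
    (neg_pos.mpr hFt).not_ge
      (nonpos_of_le_mul_integral_right hK (hF.mono hsub).neg this t ⟨le_rfl, hτ.1.1⟩)
  intro s hs
  have habs : ∫ u in s..τ, |F u| = ∫ u in s..τ, -F u :=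
    intervalIntegral.integral_congr_Ioo_of_le hs.2 fun u hu =>
      abs_of_neg (hneg u ⟨hs.1.trans hu.1.le, hu.2⟩)
  have := hle s (hsub hs) τ ⟨hs.2, hτ.1.2⟩
  rw [habs] at this
  linarith [show 0 ≤ F τ from hτ.2]

theorem eq_zero_of_le_add_mul_integral_abs (hK : 0 ≤ K) (hF : ContinuousOn F (Icc a b))
    (hF0 : ∀ t ∈ Icc a b, 0 ≤ F t) (ha : F a = 0)
    (hle : ∀ τ ∈ Icc a b, F τ ≤ F a + K * ∫ s in a..τ, |F s|) :
    ∀ t ∈ Icc a b, F t = 0 := by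
  refine fun t ht => le_antisymm (nonpos_of_le_mul_integral_left hK hF (fun τ hτ => ?_) t ht)
    (hF0 t ht)
  have habs : ∫ s in a..τ, |F s| = ∫ s in a..τ, F s :=
    intervalIntegral.integral_congr fun s hs =>
      abs_of_nonneg (hF0 s (Icc_subset_Icc_right hτ.2 (uIcc_of_le hτ.1 ▸ hs)))
  simpa [ha, habs] using hle τ hτ

end IntegralInequality

section TailIntegral

variable {a b : ℝ} {f F : ℝ → ℝ}

theorem sub_eq_integral_of_eq_integral_tail (hf : IntegrableOn f (Icc a b))
    (hF : ∀ t, F t = ∫ s in t..b, f s) {t τ : ℝ} (ht : t ∈ Icc a b) (hτ : τ ∈ Icc a b) :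
    F t - F τ = ∫ s in t..τ, f s := by
  have hb : b ∈ Icc a b := ⟨ht.1.trans ht.2, le_rfl⟩
  rw [hF, hF, ← intervalIntegral.integral_add_adjacent_intervals
    (hf.mono_set (uIcc_subset_Icc ht hτ)).intervalIntegrable
    (hf.mono_set (uIcc_subset_Icc hτ hb)).intervalIntegrable]
  ring

theorem continuousOn_of_eq_integral_tail (hf : IntegrableOn f (Icc a b))
    (hF : ∀ t, F t = ∫ s in t..b, f s) : ContinuousOn F (Icc a b) := by
  rcases le_total a b with hab | hba
  · rw [← uIcc_of_le hab] at hf ⊢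
    exact (intervalIntegral.continuousOn_primitive_interval_left hf).congr fun t _ => hF t
  · exact (subsingleton_Icc_of_ge hba).continuousOn F

theorem le_add_mul_integral_abs_of_eq_integral_tail {K : ℝ} (hf : IntegrableOn f (Icc a b))
    (hF : ∀ t, F t = ∫ s in t..b, f s) (hfF : ∀ s ∈ Icc a b, -(K * |F s|) ≤ f s) :
    ∀ t ∈ Icc a b, ∀ τ ∈ Icc t b, F τ ≤ F t + K * ∫ s in t..τ, |F s| := by
  intro t ht τ hτ
  have hsub : Icc t τ ⊆ Icc a b := Icc_subset_Icc ht.1 hτ.2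
  have hFi : IntervalIntegrable (fun s => -(K * |F s|)) volume t τ :=
    (((continuousOn_of_eq_integral_tail hf hF).mono hsub).abs.const_smul K).neg
      |>.intervalIntegrable_of_Icc hτ.1
  have hfi : IntervalIntegrable f volume t τ :=
    (hf.mono_set (uIcc_of_le hτ.1 ▸ hsub)).intervalIntegrable
  have hmono : ∫ s in t..τ, -(K * |F s|) ≤ ∫ s in t..τ, f s :=
    intervalIntegral.integral_mono_on hτ.1 hFi hfi fun s hs => hfF s (hsub hs)
  rw [intervalIntegral.integral_neg, intervalIntegral.integral_const_mul] at hmono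
  linarith [sub_eq_integral_of_eq_integral_tail hf hF ht ⟨ht.1.trans hτ.1, hτ.2⟩]

end TailIntegral

theorem positivity_from_interval_general
    (T K : ℝ) (hK : 0 < K)
    (g h : ℝ → ℝ)
    (hg_int : IntegrableOn g (Set.Icc 0 T) volume)
    (hh_int : IntegrableOn h (Set.Icc 0 T) volume)
    (δ : ℝ → ℝ) (hδ : ∀ t, δ t = ∫ s in t..T, (g s + h s))
    (hh : ∀ s ∈ Set.Icc 0 T, -(K * |δ s|) ≤ h s)
    (hg0 : ∀ s ∈ Set.Icc 0 T, 0 ≤ g s)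
    (t0 t1 : ℝ) (ht0 : 0 ≤ t0) (ht01 : t0 < t1) (ht1 : t1 ≤ T)
    (hgpos : ∀ s ∈ Set.Ioo t0 t1, 0 < g s) :
    0 < δ 0 := by
  have hint : IntegrableOn (fun s => g s + h s) (Icc 0 T) := hg_int.add hh_int
  have hcont := continuousOn_of_eq_integral_tail hint hδ
  have hle := le_add_mul_integral_abs_of_eq_integral_tail (K := K) hint hδ fun s hs => by
    linarith [hh s hs, hg0 s hs]
  have h0 : (0 : ℝ) ∈ Icc 0 T := ⟨le_rfl, ht0.trans (ht01.le.trans ht1)⟩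
  have hnonneg := nonneg_of_le_add_mul_integral_abs hK.le hcont (by simp [hδ]) hle
  refine (hnonneg 0 h0).lt_of_ne' fun hδ0 => ?_
  have hzero := eq_zero_of_le_add_mul_integral_abs hK.le hcont hnonneg hδ0 (hle 0 h0)
  have hsub : Icc t0 t1 ⊆ Icc 0 T := Icc_subset_Icc ht0 ht1
  have ht0' := hsub (left_mem_Icc.2 ht01.le)
  have ht1' := hsub (right_mem_Icc.2 ht01.le)
  have hpos : ∀ s ∈ Ioo t0 t1, 0 < g s + h s := fun s hs => by
    have hs' := hsub (Ioo_subset_Icc_self hs)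
    have hhs := hh s hs'
    rw [hzero s hs', abs_zero, mul_zero, neg_zero] at hhs
    linarith [hgpos s hs]
  have hgap := sub_eq_integral_of_eq_integral_tail hint hδ ht0' ht1'
  rw [hzero t0 ht0', hzero t1 ht1', sub_self] at hgap
  have hint01 : IntervalIntegrable (fun s => g s + h s) volume t0 t1 :=
    (hint.mono_set (uIcc_subset_Icc ht0' ht1')).intervalIntegrable
  exact (intervalIntegral.intervalIntegral_pos_of_pos_on hint01 hpos ht01).ne hgap

/-- Let `δ_t = ∫_t^T (g_s + h_s) ds`. If `h ≥ −K|δ|` on `[0,T]`, `g ≥ 0` on `[0,T]`, and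
`g > 0` on some nonempty open interval `(t₀,t₁) ⊆ [0,T]`, then `δ_0 > 0`. -/
theorem positivity_from_interval
    (T K : ℝ) (hT : 0 < T) (hK : 0 < K)
    (g h : ℝ → ℝ)
    (hg_int : IntegrableOn g (Set.Icc 0 T) volume)
    (hh_int : IntegrableOn h (Set.Icc 0 T) volume)
    (δ : ℝ → ℝ) (hδ : ∀ t, δ t = ∫ s in t..T, (g s + h s))
    (hh : ∀ s ∈ Set.Icc 0 T, -(K * |δ s|) ≤ h s)
    (hg0 : ∀ s ∈ Set.Icc 0 T, 0 ≤ g s)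
    (t0 t1 : ℝ) (ht0 : 0 ≤ t0) (ht01 : t0 < t1) (ht1 : t1 ≤ T)
    (hgpos : ∀ s ∈ Set.Ioo t0 t1, 0 < g s) :
    0 < δ 0 :=
  positivity_from_interval_general T K hK g h hg_int hh_int δ hδ hh hg0 t0 t1 ht0 ht01 ht1 hgpos
end
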